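/- Let H be a finite dimensional Hopf algebra over K with antipode S, counit ε, and let 𝒢 ∈ G(H*) be the distinguished grouplike element of H* (defined by th = 𝒢(h)t for a nonzero left integral t ∈ H). For a positive integer n, the class [H*]^n = 1 in Pic(H) if and only if S^{2n} is an inner automorphism of H and 𝒢^n = ε. Consequently, the order of [H*] in Pic(H) is the least common multiple of the order of the class of S² in Out(H) and the order of 𝒢 in G(H*). -/

import Mathlib

/-!
Write `φ ⇀ a = ∑ φ(a₍₂₎) a₍₁₎` for the left hit action of `H*` on `H`. For the left integral
`λ ∈ H*` one has `∑ λ(z w₍₂₎) w₍₁₎ = ∑ λ(z₍₂₎ w) S(z₍₁₎)`; taking `w = t` gives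
`λ(t) S(m) = ∑ λ(m t₍₂₎) t₍₁₎`, where `λ(t) ≠ 0` by nondegeneracy. Applying `S`, moving `b`
across `λ` with `ν` and taking `z = t` then gives `S²(b) = 𝒢 ⇀ ν(b)`. As `𝒢 ∘ S² = 𝒢` and `S` is
anti-comultiplicative, `S²` commutes with `𝒢 ⇀ -`, hence so does `ν = (𝒢 ∘ S) ⇀ S²(-)`, and
`S^{2n} = 𝒢ⁿ ⇀ ν^n(-)`. Since `ε` is invariant under `S` and under inner automorphisms, applying
`ε` shows that `ν^n` inner forces `𝒢ⁿ = ε`, in which case `S^{2n} = ν^n`.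
-/

/-- Convolution product on `H* = Hom_K(H, K)` for a coalgebra `H`. -/
noncomputable def conv (K H : Type) [Field K] [Ring H] [HopfAlgebra K H]
    (φ ψ : Module.Dual K H) : Module.Dual K H :=
  (LinearMap.mul' K K) ∘ₗ (TensorProduct.map φ ψ) ∘ₗ (Coalgebra.comul (R := K) (A := H))

/-- Convolution powers in `H*`, with `φ^0 = ε` (the counit). -/
noncomputable def convPow (K H : Type) [Field K] [Ring H] [HopfAlgebra K H]
    (φ : Module.Dual K H) : ℕ → Module.Dual K H
  | 0 => Coalgebra.counit (R := K)
  | n + 1 => conv K H φ (convPow K H φ n)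

open Coalgebra HopfAlgebra TensorProduct WithConv

section LeftHit

variable {R C ι : Type*} [CommSemiring R] [AddCommMonoid C] [Module R C] [Coalgebra R C]

private lemma rid_lTensor_comul_eq_sum {a : C} (𝓡 : Repr R a ι) (φ : C →ₗ[R] R) :
    TensorProduct.rid R C (φ.lTensor C (comul a)) = ∑ i ∈ 𝓡.index, φ (𝓡.right i) • 𝓡.left i := by
  simp [← 𝓡.eq, map_sum]

def leftHit : WithConv (C →ₗ[R] R) →* Module.End R C where
  toFun φ := (TensorProduct.rid R C).toLinearMap ∘ₗ φ.ofConv.lTensor C ∘ₗ comul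
  map_one' := by ext a; simp [LinearMap.convOne_def]
  map_mul' φ ψ := by
    ext a
    set 𝓡 := ℛ R a
    have coassoc := congr(((TensorProduct.rid R C).toLinearMap ∘ₗ
      (LinearMap.mul' R R ∘ₗ map φ.ofConv ψ.ofConv).lTensor C)
      $(sum_tmul_tmul_eq 𝓡 (fun i => ℛ R (𝓡.left i)) (fun i => ℛ R (𝓡.right i))))
    simp only [map_sum, LinearMap.comp_apply, LinearMap.lTensor_tmul, TensorProduct.map_tmul,
      LinearMap.mul'_apply, LinearEquiv.coe_coe, TensorProduct.rid_tmul] at coassoc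
    simp only [LinearMap.comp_apply, LinearEquiv.coe_coe, Module.End.mul_apply,
      rid_lTensor_comul_eq_sum 𝓡, rid_lTensor_comul_eq_sum (ℛ R (𝓡.left _)), map_sum, map_smul,
      (ℛ R (𝓡.right _)).convMul_apply, Finset.sum_smul, Finset.smul_sum, smul_smul,
      coassoc.symm, mul_comm]

lemma leftHit_eq_rid_lTensor_comul (φ : WithConv (C →ₗ[R] R)) (a : C) :
    leftHit φ a = TensorProduct.rid R C (φ.ofConv.lTensor C (comul a)) := rfl

lemma leftHit_apply {a : C} (𝓡 : Repr R a ι) (φ : WithConv (C →ₗ[R] R)) :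
    leftHit φ a = ∑ i ∈ 𝓡.index, φ (𝓡.right i) • 𝓡.left i :=
  rid_lTensor_comul_eq_sum 𝓡 φ.ofConv

lemma sum_counit_right_smul {a : C} (𝓡 : Repr R a ι) :
    ∑ i ∈ 𝓡.index, counit (R := R) (𝓡.right i) • 𝓡.left i = a := by
  have h := congr($(map_one (leftHit (R := R) (C := C))) a)
  rw [leftHit_apply 𝓡] at h
  simpa using h

lemma counit_leftHit (φ : WithConv (C →ₗ[R] R)) (a : C) :
    counit (R := R) (leftHit φ a) = φ a := by
  conv_rhs => rw [← sum_counit_smul (ℛ R a)]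
  simp [leftHit_apply (ℛ R a), map_sum, mul_comm]

end LeftHit

namespace HopfAlgebra

variable {R A ι : Type*} [CommSemiring R] [Semiring A] [HopfAlgebra R A]

lemma sum_antipode_tmul_one_mul_comul {u : A} (𝓡 : Repr R u ι) :
    ∑ i ∈ 𝓡.index, (antipode R (𝓡.left i) ⊗ₜ[R] (1 : A)) * comul (𝓡.right i) = 1 ⊗ₜ u := by
  have key := congr(LinearMap.rTensor A (LinearMap.mul' R A ∘ₗ (antipode R).rTensor A)
    $(coassoc_symm_apply (R := R) u))
  rw [← LinearMap.rTensor_comp_apply, LinearMap.comp_assoc, mul_antipode_rTensor_comul,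
    ← 𝓡.eq] at key
  simp only [map_sum, LinearMap.lTensor_tmul, ← (ℛ R (𝓡.right _)).eq, tmul_sum,
    TensorProduct.assoc_symm_tmul, LinearMap.rTensor_tmul, LinearMap.coe_comp, Function.comp_apply,
    LinearMap.mul'_apply, Algebra.linearMap_apply, Algebra.algebraMap_eq_smul_one, Finset.mul_sum,
    Algebra.TensorProduct.tmul_mul_tmul, one_mul] at key ⊢
  rw [key]
  simp_rw [smul_tmul, ← tmul_sum, sum_counit_smul]

lemma comul_left_inv :
    toConv (map (antipode R) (antipode R) ∘ₗ (TensorProduct.comm R A A).toLinearMap ∘ₗ comul) *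
      toConv (comul (R := R) (A := A)) = 1 := by
  ext a
  set 𝓡 := ℛ R a
  have coassoc := congr((LinearMap.mul' R (A ⊗[R] A) ∘ₗ
    map (map (antipode R) (antipode R) ∘ₗ (TensorProduct.comm R A A).toLinearMap) comul ∘ₗ
      (TensorProduct.assoc R A A A).symm.toLinearMap)
    $(sum_tmul_tmul_eq 𝓡 (fun i => ℛ R (𝓡.left i)) (fun i => ℛ R (𝓡.right i))))
  simp only [map_sum, LinearMap.comp_apply, LinearEquiv.coe_coe, TensorProduct.assoc_symm_tmul,
    TensorProduct.map_tmul, TensorProduct.comm_tmul, LinearMap.mul'_apply] at coassoc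
  rw [𝓡.convMul_apply]
  calc _ = ∑ i ∈ 𝓡.index, ∑ j ∈ (ℛ R (𝓡.left i)).index,
        (antipode R ((ℛ R (𝓡.left i)).right j) ⊗ₜ[R] antipode R ((ℛ R (𝓡.left i)).left j)) *
          comul (𝓡.right i) := by
        simp only [LinearMap.comp_apply, ← (ℛ R (𝓡.left _)).eq, map_sum, LinearEquiv.coe_coe,
          TensorProduct.comm_tmul, TensorProduct.map_tmul, Finset.sum_mul]
    _ = ∑ i ∈ 𝓡.index, ∑ j ∈ (ℛ R (𝓡.right i)).index,
        (antipode R ((ℛ R (𝓡.right i)).left j) ⊗ₜ[R] antipode R (𝓡.left i)) *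
          comul ((ℛ R (𝓡.right i)).right j) := coassoc
    _ = ∑ i ∈ 𝓡.index, ((1 : A) ⊗ₜ[R] antipode R (𝓡.left i)) * ((1 : A) ⊗ₜ[R] 𝓡.right i) := by
        refine Finset.sum_congr rfl fun i _ => ?_
        simp_rw [← sum_antipode_tmul_one_mul_comul (ℛ R (𝓡.right i)), Finset.mul_sum, ← mul_assoc,
          Algebra.TensorProduct.tmul_mul_tmul, one_mul, mul_one]
    _ = _ := by
        simp [← tmul_sum, sum_antipode_mul_eq_algebraMap_counit, Algebra.algebraMap_eq_smul_one,
          Algebra.TensorProduct.one_def]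

lemma comul_antipode :
    comul ∘ₗ antipode R =
      map (antipode R) (antipode R) ∘ₗ (TensorProduct.comm R A A).toLinearMap ∘ₗ comul (A := A) :=
  congr(ofConv
    $(left_inv_eq_right_inv comul_left_inv LinearMap.comul_right_inv)).symm

def _root_.Coalgebra.Repr.antipode {a : A} (𝓡 : Repr R a ι) : Repr R (antipode R a) ι where
  index := 𝓡.index
  left i := HopfAlgebra.antipode R (𝓡.right i)
  right i := HopfAlgebra.antipode R (𝓡.left i)
  eq := by
    have h := LinearMap.congr_fun (comul_antipode (R := R) (A := A)) a
    rw [LinearMap.comp_apply] at h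
    rw [h, LinearMap.comp_apply, LinearMap.comp_apply, ← 𝓡.eq]
    simp [map_sum]

section AlgHom

variable {B : Type*} [CommSemiring B] [Algebra R B] (G : A →ₐ[R] B)

lemma algHom_mul_algHom_comp_antipode :
    toConv G.toLinearMap * toConv (G.toLinearMap ∘ₗ antipode R) = 1 := by
  have := LinearMap.algHom_comp_convMul_distrib G (toConv .id) (toConv (antipode R (A := A)))
  rw [LinearMap.id_mul_antipode] at this
  ext x
  simpa using congr($this x).symm

lemma algHom_comp_antipode_mul_algHom :
    toConv (G.toLinearMap ∘ₗ antipode R) * toConv G.toLinearMap = 1 := by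
  have := LinearMap.algHom_comp_convMul_distrib G (toConv (antipode R (A := A))) (toConv .id)
  rw [LinearMap.antipode_mul_id] at this
  ext x
  simpa using congr($this x).symm

lemma algHom_antipode_antipode (a : A) : G (antipode R (antipode R a)) = G a := by
  have hGS : toConv (G.toLinearMap ∘ₗ antipode R) *
      toConv (G.toLinearMap ∘ₗ antipode R ∘ₗ antipode R) = 1 := by
    ext x
    rw [(ℛ R x).convMul_apply]
    calc _ = G (antipode R (∑ i ∈ (ℛ R x).index,
          (ℛ R x).left i * antipode R ((ℛ R x).right i))) := by
          simp [map_sum, antipode_mul_antidistrib, mul_comm]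
      _ = _ := by
          simp [sum_mul_antipode_eq_algebraMap_counit, Algebra.algebraMap_eq_smul_one]
  exact congr(ofConv $(left_inv_eq_right_inv (algHom_mul_algHom_comp_antipode G) hGS) a).symm

end AlgHom

lemma commute_leftHit_antipode_mul_antipode (G : A →ₐ[R] R) :
    Commute (leftHit (toConv G.toLinearMap)) (antipode R * antipode R) := by
  ext a
  simp [leftHit_apply (ℛ R a), leftHit_apply ((ℛ R a).antipode.antipode),
    Coalgebra.Repr.antipode, algHom_antipode_antipode, map_sum]

lemma counit_iterate_antipode (k : ℕ) (a : A) :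
    counit (R := R) ((⇑(antipode R))^[k] a) = counit a := by
  induction k generalizing a with
  | zero => rfl
  | succ k ih => rw [Function.iterate_succ_apply, ih, counit_antipode]

end HopfAlgebra

lemma Bialgebra.counit_units_inv_mul_mul {R A : Type*} [CommSemiring R] [Semiring A]
    [Bialgebra R A] (u : Aˣ) (a : A) : counit (R := R) (↑u⁻¹ * a * ↑u) = counit a := by
  rw [counit_mul, counit_mul, mul_right_comm, ← counit_mul, Units.inv_mul, counit_one, one_mul]

section Integral

variable {R H ι : Type*} [CommSemiring R] [Semiring H] [HopfAlgebra R H] {lam : Module.Dual R H}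

lemma leftHit_eq_smul_one_of_convMul_eq [Module.Projective R H]
    (hlam : ∀ f : Module.Dual R H, toConv f * toConv lam = f 1 • toConv lam) (a : H) :
    leftHit (toConv lam) a = lam a • 1 := by
  refine Module.eval_apply_injective R (LinearMap.ext fun f => ?_)
  have := congr($(hlam f) a)
  rw [(ℛ R a).convMul_apply] at this
  simpa [leftHit_apply (ℛ R a), map_sum, mul_comm] using this

lemma rid_lTensor_tmul_one_mul (x : H) (y : H ⊗[R] H) :
    TensorProduct.rid R H (lam.lTensor H ((x ⊗ₜ[R] 1) * y)) =
      x * TensorProduct.rid R H (lam.lTensor H y) := by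
  induction y using TensorProduct.induction_on with
  | zero => simp
  | tmul a b => simp
  | add y z hy hz => simp [mul_add, hy, hz]

lemma leftHit_comp_mulLeft_eq_sum (hlam : ∀ a, leftHit (toConv lam) a = lam a • 1)
    (z w : H) (𝓡 : Repr R z ι) :
    leftHit (toConv (lam ∘ₗ LinearMap.mulLeft R z)) w =
      ∑ i ∈ 𝓡.index, lam (𝓡.right i * w) • antipode R (𝓡.left i) := by
  calc leftHit (toConv (lam ∘ₗ LinearMap.mulLeft R z)) w
      = TensorProduct.rid R H (lam.lTensor H ((1 ⊗ₜ[R] z) * comul w)) := by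
        rw [leftHit_apply (ℛ R w), ← (ℛ R w).eq, Finset.mul_sum]
        simp [map_sum]
    _ = ∑ i ∈ 𝓡.index, antipode R (𝓡.left i) * leftHit (toConv lam) (𝓡.right i * w) := by
        rw [← sum_antipode_tmul_one_mul_comul 𝓡, Finset.sum_mul, map_sum, map_sum]
        simp_rw [mul_assoc, ← Bialgebra.comul_mul, rid_lTensor_tmul_one_mul,
          leftHit_eq_rid_lTensor_comul]
    _ = _ := by simp [hlam]

lemma smul_antipode_eq_leftHit_comp_mulLeft (hlam : ∀ a, leftHit (toConv lam) a = lam a • 1)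
    {t : H} (hti : ∀ h : H, h * t = counit (R := R) h • t) (m : H) :
    lam t • antipode R m = leftHit (toConv (lam ∘ₗ LinearMap.mulLeft R m)) t := by
  rw [leftHit_comp_mulLeft_eq_sum hlam m t (ℛ R m)]
  conv_lhs => rw [← sum_counit_right_smul (ℛ R m)]
  simp [hti, map_sum, Finset.smul_sum, smul_smul, mul_comm]

end Integral

section Nakayama

variable {K H : Type*} [Field K] [Ring H] [HopfAlgebra K H] {lam : Module.Dual K H} {t : H}

lemma integral_apply_ne_zero
    (hFrob : Function.Bijective fun a : H => (LinearMap.mulRight K a).dualMap lam)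
    (ht : t ≠ 0) (hti : ∀ h : H, h * t = counit (R := K) h • t) : lam t ≠ 0 := by
  obtain ⟨a, ha⟩ := hFrob.2 counit
  have hta : t = lam t • a := hFrob.1 <| LinearMap.ext fun r => by
    have hr : lam (r * a) = counit r := congr($ha r)
    simp [hti, hr, mul_comm]
  intro h0
  rw [h0, zero_smul] at hta
  exact ht hta

lemma antipode_antipode_eq_leftHit_nakayama
    (hlam : ∀ a, leftHit (toConv lam) a = lam a • 1) (hti : ∀ h : H, h * t = counit (R := K) h • t)
    {G : H →ₐ[K] K} (hG : ∀ h : H, t * h = G h • t) (ht : lam t ≠ 0)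
    {ν : H ≃ₐ[K] H} (hν : ∀ a r : H, lam (a * r) = lam (r * ν a)) (b : H) :
    antipode K (antipode K b) = leftHit (toConv G.toLinearMap) (ν b) := by
  have hGt : leftHit (toConv (lam ∘ₗ LinearMap.mulLeft K t)) (ν b) =
      lam t • leftHit (toConv G.toLinearMap) (ν b) := by
    rw [leftHit_apply (ℛ K (ν b)), leftHit_apply (ℛ K (ν b)), Finset.smul_sum]
    refine Finset.sum_congr rfl fun i _ => ?_
    rw [smul_smul]
    congr 1
    simp [hG, mul_comm]
  refine smul_right_injective H ht ?_
  calc lam t • antipode K (antipode K b)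
      = antipode K (leftHit (toConv (lam ∘ₗ LinearMap.mulLeft K b)) t) := by
        rw [← smul_antipode_eq_leftHit_comp_mulLeft hlam hti, map_smul]
    _ = ∑ i ∈ (ℛ K t).index, lam ((ℛ K t).right i * ν b) • antipode K ((ℛ K t).left i) := by
        simp only [leftHit_apply (ℛ K t), map_sum, map_smul, LinearMap.comp_apply,
          LinearMap.mulLeft_apply, hν b]
    _ = lam t • leftHit (toConv G.toLinearMap) (ν b) := by
        rw [← leftHit_comp_mulLeft_eq_sum hlam t (ν b) (ℛ K t), hGt]

lemma iterate_antipode_eq_leftHit_nakayama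
    (hlam : ∀ a, leftHit (toConv lam) a = lam a • 1) (hti : ∀ h : H, h * t = counit (R := K) h • t)
    {G : H →ₐ[K] K} (hG : ∀ h : H, t * h = G h • t) (ht : lam t ≠ 0)
    {ν : H ≃ₐ[K] H} (hν : ∀ a r : H, lam (a * r) = lam (r * ν a)) (n : ℕ) (b : H) :
    (⇑(antipode K))^[2 * n] b = leftHit (toConv G.toLinearMap ^ n) ((ν ^ n) b) := by
  have hS : antipode K * antipode K = leftHit (toConv G.toLinearMap) * ν.toLinearMap :=
    LinearMap.ext (antipode_antipode_eq_leftHit_nakayama hlam hti hG ht hν)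
  have hν' : ν.toLinearMap =
      leftHit (toConv (G.toLinearMap ∘ₗ antipode K)) * (antipode K * antipode K) := by
    rw [hS, ← mul_assoc, ← map_mul, algHom_comp_antipode_mul_algHom, map_one, one_mul]
  have hcomm : Commute (leftHit (toConv G.toLinearMap)) ν.toLinearMap := by
    have hGS : Commute (toConv G.toLinearMap) (toConv (G.toLinearMap ∘ₗ antipode K)) :=
      (algHom_mul_algHom_comp_antipode G).trans (algHom_comp_antipode_mul_algHom G).symm
    rw [hν']
    exact (hGS.map leftHit).mul_right (commute_leftHit_antipode_mul_antipode G)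
  have := congr($(hcomm.mul_pow n) b)
  rw [← hS, ← map_pow, ← sq, ← pow_mul] at this
  simpa [Module.End.coe_pow] using this

end Nakayama

lemma convPow_eq_ofConv_pow {K H : Type} [Field K] [Ring H] [HopfAlgebra K H]
    (φ : Module.Dual K H) (n : ℕ) : convPow K H φ n = ofConv (toConv φ ^ n) := by
  induction n with
  | zero => ext; simp [convPow, LinearMap.convOne_def]
  | succ n ih => rw [pow_succ', convPow, ih]; rfl

theorem stmt17_general (K H : Type) [Field K] [Ring H] [HopfAlgebra K H]
    (t : H) (ht : t ≠ 0)
    (hti : ∀ h : H, h * t = Coalgebra.counit (R := K) h • t)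
    (G : H →ₐ[K] K) (hG : ∀ h : H, t * h = G h • t)
    (lam : Module.Dual K H)
    (hint : ∀ f : Module.Dual K H, conv K H f lam = f 1 • lam)
    (hFrob : Function.Bijective fun a : H => (LinearMap.mulRight K a).dualMap lam)
    (ν : H ≃ₐ[K] H) (hν : ∀ a r : H, lam (a * r) = lam (r * ν a)) :
    ∀ n : ℕ, 0 < n →
      ((∃ u : Hˣ, ∀ r : H, (ν ^ n) r = ↑u⁻¹ * r * ↑u) ↔
        ((∃ u : Hˣ, ∀ r : H,
            (⇑(HopfAlgebra.antipode (R := K) (A := H)))^[2 * n] r = ↑u⁻¹ * r * ↑u) ∧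
          convPow K H G.toLinearMap n = Coalgebra.counit (R := K))) := by
  intro n _
  have hS := iterate_antipode_eq_leftHit_nakayama
    (leftHit_eq_smul_one_of_convMul_eq fun f => WithConv.ext (hint f)) hti hG
    (integral_apply_ne_zero hFrob ht hti) hν n
  have hpow : convPow K H G.toLinearMap n = counit ↔ toConv G.toLinearMap ^ n = 1 := by
    rw [convPow_eq_ofConv_pow, ← WithConv.ofConv_injective.eq_iff]
    simp [LinearMap.convOne_def]
  rw [hpow]
  constructor
  · rintro ⟨u, hu⟩
    have hGn : toConv G.toLinearMap ^ n = 1 := by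
      ext x
      obtain ⟨y, rfl⟩ := (ν ^ n).surjective x
      rw [← counit_leftHit, ← hS, counit_iterate_antipode, hu]
      simp only [LinearMap.convOne_apply, Bialgebra.counit_units_inv_mul_mul,
        Algebra.algebraMap_self, RingHom.id_apply]
    exact ⟨⟨u, fun r => by rw [hS, hGn, map_one, Module.End.one_apply, hu]⟩, hGn⟩
  · rintro ⟨⟨u, hu⟩, hGn⟩
    exact ⟨u, fun r => by rw [← hu, hS, hGn, map_one, Module.End.one_apply]⟩

/-- Theorem A: Let `H` be a finite dimensional Hopf algebra with
antipode `S` and counit `ε`, let `t` be a nonzero left integral in `H`, `𝒢 = G` the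
distinguished grouplike element of `H*` (`t * h = G h • t`), let `lam` be a nonzero
left integral on `H` (a Frobenius form for `H`), and `ν` the associated Nakayama
automorphism (so that `[H*] = [_1H_ν]` in `Pic(H)` and `[H*]^n = 1 ↔ ν^n` is inner).
Then for every positive integer `n`: `[H*]^n = 1` in `Pic(H)` (i.e. `ν^n` is inner)
if and only if `S^{2n}` is inner and `G^n = ε` (convolution power). Consequently the
order of `[H*]` in `Pic(H)` is the least common multiple of the order of the class of
`S²` in `Out(H)` and the order of `G` in `G(H*)`. -/
theorem stmt17 (K H : Type) [Field K] [Ring H] [HopfAlgebra K H] [FiniteDimensional K H]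
    (t : H) (ht : t ≠ 0)
    (hti : ∀ h : H, h * t = Coalgebra.counit (R := K) h • t)
    (G : H →ₐ[K] K) (hG : ∀ h : H, t * h = G h • t)
    (lam : Module.Dual K H) (hlam : lam ≠ 0)
    (hint : ∀ f : Module.Dual K H, conv K H f lam = f 1 • lam)
    (hFrob : Function.Bijective fun a : H => (LinearMap.mulRight K a).dualMap lam)
    (ν : H ≃ₐ[K] H) (hν : ∀ a r : H, lam (a * r) = lam (r * ν a)) :
    ∀ n : ℕ, 0 < n →
      ((∃ u : Hˣ, ∀ r : H, (ν ^ n) r = ↑u⁻¹ * r * ↑u) ↔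
        ((∃ u : Hˣ, ∀ r : H,
            (⇑(HopfAlgebra.antipode (R := K) (A := H)))^[2 * n] r = ↑u⁻¹ * r * ↑u) ∧
          convPow K H G.toLinearMap n = Coalgebra.counit (R := K))) :=
  stmt17_general K H t ht hti G hG lam hint hFrob ν hν
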